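/- For a logit vector g ∈ R^k with unique maximum at index c, the confidence max_i σ(g/τ)_i = σ(g/τ)_c is a strictly decreasing function of τ on (0, ∞), with range (1/k, 1) as τ ranges over (0, ∞). -/

import Mathlib

/-!
Dividing numerator and denominator by `exp (g c / τ)` writes the confidence as `1 / Z τ` with
`Z τ = ∑ j, exp (-(g c - g j) / τ)`, a partition function whose energies `g c - g j` are
nonnegative and vanish only at `c`. Each term `exp (-E / τ)` with `E > 0` increases strictly from
`0` (as `τ → 0⁺`) to `1` (as `τ → ∞`), so `Z` increases strictly from `1` to `k`, and by
continuity and the intermediate value theorem the confidence takes exactly the values in `(1/k, 1)`.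
-/

noncomputable def softmax {k : ℕ} (z : Fin k → ℝ) (i : Fin k) : ℝ :=
  Real.exp (z i) / ∑ j, Real.exp (z j)

open Filter Topology Set

noncomputable def partitionFunction {ι : Type*} [Fintype ι] (E : ι → ℝ) (τ : ℝ) : ℝ :=
  ∑ j, Real.exp (-E j / τ)

section Boltzmann

variable {E τ σ : ℝ}

lemma exp_neg_div_le_exp_neg_div (hE : 0 ≤ E) (hτ : 0 < τ) (hτσ : τ ≤ σ) :
    Real.exp (-E / τ) ≤ Real.exp (-E / σ) := by
  rw [Real.exp_le_exp, neg_div, neg_div, neg_le_neg_iff]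
  exact div_le_div_of_nonneg_left hE hτ hτσ

lemma exp_neg_div_lt_exp_neg_div (hE : 0 < E) (hτ : 0 < τ) (hτσ : τ < σ) :
    Real.exp (-E / τ) < Real.exp (-E / σ) := by
  rw [Real.exp_lt_exp, neg_div, neg_div, neg_lt_neg_iff]
  exact div_lt_div_of_pos_left hE hτ hτσ

lemma exp_neg_div_lt_one (hE : 0 < E) (hτ : 0 < τ) : Real.exp (-E / τ) < 1 :=
  Real.exp_lt_one_iff.2 (div_neg_of_neg_of_pos (neg_neg_of_pos hE) hτ)

lemma tendsto_exp_neg_div_nhdsGT_zero (hE : 0 < E) :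
    Tendsto (fun τ => Real.exp (-E / τ)) (𝓝[>] 0) (𝓝 0) := by
  simp only [div_eq_mul_inv]
  exact Real.tendsto_exp_atBot.comp (tendsto_inv_nhdsGT_zero.const_mul_atTop_of_neg (by linarith))

lemma tendsto_exp_neg_div_atTop (E : ℝ) :
    Tendsto (fun τ => Real.exp (-E / τ)) atTop (𝓝 1) := by
  simpa [Function.comp_def] using
    (Real.continuous_exp.tendsto 0).comp (tendsto_const_nhds.div_atTop tendsto_id)

end Boltzmann

namespace partitionFunction

variable {ι : Type*} [Fintype ι] {E : ι → ℝ} {c i : ι}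

lemma one_lt (hc : E c = 0) (hi : i ≠ c) (τ : ℝ) : 1 < partitionFunction E τ := by
  have h := Finset.single_lt_sum (f := fun j => Real.exp (-E j / τ)) hi (Finset.mem_univ c)
    (Finset.mem_univ i) (Real.exp_pos _) fun j _ _ => (Real.exp_pos _).le
  simpa [partitionFunction, hc] using h

lemma lt_card (hE : ∀ j, 0 ≤ E j) (hi : 0 < E i) {τ : ℝ} (hτ : 0 < τ) :
    partitionFunction E τ < Fintype.card ι := by
  have h : partitionFunction E τ < ∑ _j : ι, (1 : ℝ) :=
    Finset.sum_lt_sum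
      (fun j _ => Real.exp_le_one_iff.2 <|
        div_nonpos_of_nonpos_of_nonneg (neg_nonpos.2 (hE j)) hτ.le)
      ⟨i, Finset.mem_univ _, exp_neg_div_lt_one hi hτ⟩
  simpa using h

lemma strictMonoOn (hE : ∀ j, 0 ≤ E j) (hi : 0 < E i) :
    StrictMonoOn (partitionFunction E) (Ioi 0) := fun _ hτ _ _ hτσ =>
  Finset.sum_lt_sum (fun j _ => exp_neg_div_le_exp_neg_div (hE j) hτ hτσ.le)
    ⟨i, Finset.mem_univ _, exp_neg_div_lt_exp_neg_div hi hτ hτσ⟩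

lemma continuousOn : ContinuousOn (partitionFunction E) (Ioi 0) :=
  continuousOn_finsetSum _ fun _ _ =>
    (continuousOn_const.div continuousOn_id fun _ hτ => hτ.ne').rexp

lemma tendsto_atTop : Tendsto (partitionFunction E) atTop (𝓝 (Fintype.card ι)) := by
  have h := tendsto_finsetSum Finset.univ fun j _ => tendsto_exp_neg_div_atTop (E j)
  simp only [Finset.sum_const, Finset.card_univ, nsmul_eq_mul, mul_one] at h
  exact h

lemma tendsto_nhdsGT_zero (hc : E c = 0) (hE : ∀ j, j ≠ c → 0 < E j) :
    Tendsto (partitionFunction E) (𝓝[>] 0) (𝓝 1) := by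
  classical
  have h :
      Tendsto (partitionFunction E) (𝓝[>] 0) (𝓝 (∑ j, if j = c then (1 : ℝ) else 0)) := by
    refine tendsto_finsetSum _ fun j _ => ?_
    rcases eq_or_ne j c with rfl | hj
    · simp [hc]
    · simpa [hj] using tendsto_exp_neg_div_nhdsGT_zero (hE j hj)
  simpa using h

end partitionFunction

lemma softmax_div_eq_inv_partitionFunction {k : ℕ} (g : Fin k → ℝ) (c : Fin k) (τ : ℝ) :
    softmax (fun j => g j / τ) c = (partitionFunction (fun j => g c - g j) τ)⁻¹ := by
  have h : partitionFunction (fun j => g c - g j) τ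
      = (∑ j, Real.exp (g j / τ)) / Real.exp (g c / τ) := by
    rw [partitionFunction, Finset.sum_div]
    refine Finset.sum_congr rfl fun j _ => ?_
    rw [neg_sub, sub_div, Real.exp_sub]
  rw [softmax, h, inv_div]

lemma ContinuousOn.image_Ioi_zero_eq_Ioo {f : ℝ → ℝ} {a b : ℝ} (hf : ContinuousOn f (Ioi 0))
    (h0 : Tendsto f (𝓝[>] 0) (𝓝 b)) (htop : Tendsto f atTop (𝓝 a))
    (hmaps : MapsTo f (Ioi 0) (Ioo a b)) : f '' Ioi 0 = Ioo a b :=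
  (image_subset_iff.2 hmaps).antisymm <| isPreconnected_Ioi.intermediate_value_Ioo
    (le_principal_iff.2 (Ioi_mem_atTop 0)) (le_principal_iff.2 self_mem_nhdsWithin) hf htop h0

theorem stmt11 {k : ℕ} (hk : 1 < k) (g : Fin k → ℝ) (c : Fin k)
    (hc : ∀ i, i ≠ c → g i < g c) :
    StrictAntiOn (fun τ : ℝ => softmax (fun j => g j / τ) c) (Set.Ioi 0)
    ∧ (fun τ : ℝ => softmax (fun j => g j / τ) c) '' Set.Ioi 0 =
        Set.Ioo (1 / (k : ℝ)) 1 := by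
  have : Nontrivial (Fin k) := Fin.nontrivial_iff_two_le.mpr hk
  obtain ⟨i, hi⟩ := exists_ne c
  simp_rw [softmax_div_eq_inv_partitionFunction]
  set E : Fin k → ℝ := fun j => g c - g j
  have hEc : E c = 0 := sub_self _
  have hE : ∀ j, j ≠ c → 0 < E j := fun j hj => sub_pos.2 (hc j hj)
  have hE₀ : ∀ j, 0 ≤ E j := fun j =>
    sub_nonneg.2 <| (eq_or_ne j c).elim (fun h => h ▸ le_rfl) fun hj => (hc j hj).le
  have hZ₀ : ∀ τ, 0 < partitionFunction E τ := fun τ =>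
    one_pos.trans (partitionFunction.one_lt hEc hi τ)
  have hk₀ : (0 : ℝ) < k := by exact_mod_cast (Nat.zero_lt_one.trans hk)
  refine ⟨fun σ hσ τ hτ hστ => (inv_lt_inv₀ (hZ₀ τ) (hZ₀ σ)).2 <|
    partitionFunction.strictMonoOn hE₀ (hE i hi) hσ hτ hστ, ?_⟩
  have hlim₀ := (partitionFunction.tendsto_nhdsGT_zero hEc hE).inv₀ one_ne_zero
  have hlimtop := (partitionFunction.tendsto_atTop (E := E)).inv₀ (by simpa using hk₀.ne')
  rw [inv_one] at hlim₀
  rw [Fintype.card_fin] at hlimtop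
  rw [one_div]
  refine ContinuousOn.image_Ioi_zero_eq_Ioo
    (partitionFunction.continuousOn.inv₀ fun τ _ => (hZ₀ τ).ne') hlim₀ hlimtop
    fun τ hτ => ⟨?_, ?_⟩
  · exact (inv_lt_inv₀ hk₀ (hZ₀ τ)).2 <| by
      simpa using partitionFunction.lt_card hE₀ (hE i hi) hτ
  · exact inv_lt_one_of_one_lt₀ (partitionFunction.one_lt hEc hi τ)
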